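/- Assume λ + μ² ≠ 0. Let P, Q, R, S be a pqrs-quad and define the B-difference functions G_P(w) = P(w+iπ) − e^{iℓπ}·(λ+μ²)⁻¹·(μ·e^{2w}·R(w) + S(w)), G_Q(w) = Q(w+iπ) + e^{iℓπ}·((μ·e^{2w}·P(w) + Q(w)) + μ·(λ+μ²)⁻¹·e^{2w}·(μ·e^{2w}·R(w) + S(w))), G_R(w) = R(w+iπ) + e^{iℓπ}·R(w), G_S(w) = S(w+iπ) − e^{iℓπ}·((λ+μ²)·P(w) + μ·e^{2w}·R(w)). Then for every w ∈ ℂ: e^w·G_P′(w) = ((ℓ−1)e^w − μ)·G_P(w) + G_Q(w) − e^{2w}·G_R(w); G_Q′(w) = −e^w·((λ + (ℓ+1)μe^w)·G_P(w) + μ·G_Q(w) + G_S(w)); e^w·G_R′(w) = (λ+μ²)·G_P(w) + (2(ℓ−1) + μe^w)·e^w·G_R(w) + G_S(w); e^w·G_S′(w) = (λ+μ²)·G_Q(w) − (λ + (ℓ+1)μe^w)·e^{2w}·G_R(w) + (μ + (ℓ−1)e^w)·G_S(w). -/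

import Mathlib

/-!
With `X = (P, Q, R, S)`, the B-difference is `G(w) = X(w + iπ) - e^{iℓπ} M(w) X(w)` for an explicit
gauge transformation `M(w)`. Translation by `iπ` turns the pqrs-system into the same system with `e^w`
replaced by `-e^w`. A direct computation, using `λ + μ² ≠ 0`, shows that `M X` solves this shifted
system too, and since the shifted system is linear, so does `G`.
-/

noncomputable def ipi : ℂ := (Real.pi : ℂ) * Complex.I

noncomputable def GP (ell lam mu : ℂ) (P Q R S : ℂ → ℂ) : ℂ → ℂ := fun w =>
  P (w + ipi) - Complex.exp (Complex.I * ell * (Real.pi : ℂ)) * (lam + mu ^ 2)⁻¹ *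
    (mu * Complex.exp (2 * w) * R w + S w)

noncomputable def GQ (ell lam mu : ℂ) (P Q R S : ℂ → ℂ) : ℂ → ℂ := fun w =>
  Q (w + ipi) + Complex.exp (Complex.I * ell * (Real.pi : ℂ)) *
    ((mu * Complex.exp (2 * w) * P w + Q w) +
      mu * (lam + mu ^ 2)⁻¹ * Complex.exp (2 * w) *
        (mu * Complex.exp (2 * w) * R w + S w))

noncomputable def GR (ell lam mu : ℂ) (P Q R S : ℂ → ℂ) : ℂ → ℂ := fun w =>
  R (w + ipi) + Complex.exp (Complex.I * ell * (Real.pi : ℂ)) * R w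

noncomputable def GS (ell lam mu : ℂ) (P Q R S : ℂ → ℂ) : ℂ → ℂ := fun w =>
  S (w + ipi) - Complex.exp (Complex.I * ell * (Real.pi : ℂ)) *
    ((lam + mu ^ 2) * P w + mu * Complex.exp (2 * w) * R w)

section

open Complex

structure IsPQRSQuad (ell lam mu : ℂ) (P Q R S : ℂ → ℂ) : Prop where
  differentiable_P : Differentiable ℂ P
  differentiable_Q : Differentiable ℂ Q
  differentiable_R : Differentiable ℂ R
  differentiable_S : Differentiable ℂ S
  deriv_P : ∀ w, exp w * deriv P w = (mu + (ell - 1) * exp w) * P w - Q w + exp (2 * w) * R w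
  deriv_Q : ∀ w, deriv Q w = exp w * ((lam - (ell + 1) * mu * exp w) * P w + mu * Q w + S w)
  deriv_R : ∀ w, exp w * deriv R w =
    -(lam + mu ^ 2) * P w + exp w * (2 * (ell - 1) - mu * exp w) * R w - S w
  deriv_S : ∀ w, exp w * deriv S w =
    -(lam + mu ^ 2) * Q w + exp (2 * w) * (lam - (ell + 1) * mu * exp w) * R w
      + ((ell - 1) * exp w - mu) * S w

/-- The pqrs-system pulled back along `w ↦ w + iπ`, which replaces `e^w` by `-e^w`. -/
structure IsShiftedPQRSQuad (ell lam mu : ℂ) (P Q R S : ℂ → ℂ) : Prop where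
  differentiable_P : Differentiable ℂ P
  differentiable_Q : Differentiable ℂ Q
  differentiable_R : Differentiable ℂ R
  differentiable_S : Differentiable ℂ S
  deriv_P : ∀ w, exp w * deriv P w = ((ell - 1) * exp w - mu) * P w + Q w - exp (2 * w) * R w
  deriv_Q : ∀ w, deriv Q w = -exp w * ((lam + (ell + 1) * mu * exp w) * P w + mu * Q w + S w)
  deriv_R : ∀ w, exp w * deriv R w =
    (lam + mu ^ 2) * P w + (2 * (ell - 1) + mu * exp w) * exp w * R w + S w
  deriv_S : ∀ w, exp w * deriv S w =
    (lam + mu ^ 2) * Q w - (lam + (ell + 1) * mu * exp w) * exp (2 * w) * R w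
      + (mu + (ell - 1) * exp w) * S w

lemma exp_add_ipi (w : ℂ) : exp (w + ipi) = -exp w :=
  exp_add_pi_mul_I w

lemma exp_two_mul_eq_sq (w : ℂ) : exp (2 * w) = exp w ^ 2 := by
  rw [sq, ← exp_add, two_mul]

lemma exp_two_mul_add_ipi (w : ℂ) : exp (2 * (w + ipi)) = exp (2 * w) := by
  rw [exp_two_mul_eq_sq, exp_two_mul_eq_sq, exp_add_ipi, neg_sq]

lemma deriv_exp_two_mul (w : ℂ) : deriv (fun u => exp (2 * u)) w = 2 * exp (2 * w) := by
  simp [mul_comm]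

variable {ell lam mu : ℂ} {P Q R S : ℂ → ℂ}

theorem IsPQRSQuad.shift (h : IsPQRSQuad ell lam mu P Q R S) :
    IsShiftedPQRSQuad ell lam mu (fun w => P (w + ipi)) (fun w => Q (w + ipi))
      (fun w => R (w + ipi)) (fun w => S (w + ipi)) := by
  obtain ⟨hP, hQ, hR, hS, hP', hQ', hR', hS'⟩ := h
  replace hP' := fun w => hP' (w + ipi)
  replace hQ' := fun w => hQ' (w + ipi)
  replace hR' := fun w => hR' (w + ipi)
  replace hS' := fun w => hS' (w + ipi)
  simp only [exp_add_ipi, exp_two_mul_add_ipi] at hP' hQ' hR' hS'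
  refine ⟨by fun_prop, by fun_prop, by fun_prop, by fun_prop,
    fun w => ?_, fun w => ?_, fun w => ?_, fun w => ?_⟩ <;>
  rw [deriv_comp_add_const]
  · linear_combination -hP' w
  · linear_combination hQ' w
  · linear_combination -hR' w
  · linear_combination -hS' w

theorem IsShiftedPQRSQuad.sub_const_mul {P₁ Q₁ R₁ S₁ : ℂ → ℂ}
    (h : IsShiftedPQRSQuad ell lam mu P Q R S) (h₁ : IsShiftedPQRSQuad ell lam mu P₁ Q₁ R₁ S₁)
    (c : ℂ) :
    IsShiftedPQRSQuad ell lam mu (fun w => P w - c * P₁ w) (fun w => Q w - c * Q₁ w)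
      (fun w => R w - c * R₁ w) (fun w => S w - c * S₁ w) := by
  obtain ⟨hP, hQ, hR, hS, hP', hQ', hR', hS'⟩ := h
  obtain ⟨hP₁, hQ₁, hR₁, hS₁, hP₁', hQ₁', hR₁', hS₁'⟩ := h₁
  refine ⟨by fun_prop, by fun_prop, by fun_prop, by fun_prop,
    fun w => ?_, fun w => ?_, fun w => ?_, fun w => ?_⟩ <;>
  simp (disch := fun_prop) only [deriv_fun_sub, deriv_const_mul]
  · linear_combination hP' w - c * hP₁' w
  · linear_combination hQ' w - c * hQ₁' w
  · linear_combination hR' w - c * hR₁' w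
  · linear_combination hS' w - c * hS₁' w

/-- `X(w + iπ)` and `e^{iℓπ}` times this quad are the two sides of the B-relations. -/
theorem IsPQRSQuad.gaugeTransform (h : IsPQRSQuad ell lam mu P Q R S) (hne : lam + mu ^ 2 ≠ 0) :
    IsShiftedPQRSQuad ell lam mu
      (fun w => (lam + mu ^ 2)⁻¹ * (mu * exp (2 * w) * R w + S w))
      (fun w => -(mu * exp (2 * w) * P w + Q w +
        mu * (lam + mu ^ 2)⁻¹ * exp (2 * w) * (mu * exp (2 * w) * R w + S w)))
      (fun w => -R w)
      (fun w => (lam + mu ^ 2) * P w + mu * exp (2 * w) * R w) := by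
  obtain ⟨hP, hQ, hR, hS, hP', hQ', hR', hS'⟩ := h
  have deriv_eq_div (F : ℂ → ℂ) {G : ℂ → ℂ} (hF : ∀ w, exp w * deriv F w = G w) (w : ℂ) :
      deriv F w = G w / exp w :=
    eq_div_of_mul_eq (exp_ne_zero w) ((mul_comm _ _).trans (hF w))
  refine ⟨by fun_prop, by fun_prop, by fun_prop, by fun_prop,
    fun w => ?_, fun w => ?_, fun w => ?_, fun w => ?_⟩ <;>
  simp (disch := fun_prop) only [deriv_fun_add, deriv_fun_mul, deriv.fun_neg, deriv_const,
    deriv_exp_two_mul, deriv_eq_div P hP',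
    hQ', deriv_eq_div R hR', deriv_eq_div S hS'] <;>
  simp only [exp_two_mul_eq_sq] <;>
  field_simp <;>
  ring

end

theorem statement_17 (ell lam mu : ℂ) (hne : lam + mu ^ 2 ≠ 0) (P Q R S : ℂ → ℂ)
    (hP : Differentiable ℂ P) (hQ : Differentiable ℂ Q)
    (hR : Differentiable ℂ R) (hS : Differentiable ℂ S)
    (hsys1 : ∀ w : ℂ, Complex.exp w * deriv P w =
      (mu + (ell - 1) * Complex.exp w) * P w - Q w + Complex.exp (2 * w) * R w)
    (hsys2 : ∀ w : ℂ, deriv Q w =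
      Complex.exp w * ((lam - (ell + 1) * mu * Complex.exp w) * P w + mu * Q w + S w))
    (hsys3 : ∀ w : ℂ, Complex.exp w * deriv R w =
      -(lam + mu ^ 2) * P w + Complex.exp w * (2 * (ell - 1) - mu * Complex.exp w) * R w - S w)
    (hsys4 : ∀ w : ℂ, Complex.exp w * deriv S w =
      -(lam + mu ^ 2) * Q w + Complex.exp (2 * w) * (lam - (ell + 1) * mu * Complex.exp w) * R w
        + ((ell - 1) * Complex.exp w - mu) * S w) :
    ∀ w : ℂ,
      Complex.exp w * deriv (GP ell lam mu P Q R S) w =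
        ((ell - 1) * Complex.exp w - mu) * GP ell lam mu P Q R S w +
          GQ ell lam mu P Q R S w - Complex.exp (2 * w) * GR ell lam mu P Q R S w ∧
      deriv (GQ ell lam mu P Q R S) w =
        -(Complex.exp w) * ((lam + (ell + 1) * mu * Complex.exp w) * GP ell lam mu P Q R S w +
          mu * GQ ell lam mu P Q R S w + GS ell lam mu P Q R S w) ∧
      Complex.exp w * deriv (GR ell lam mu P Q R S) w =
        (lam + mu ^ 2) * GP ell lam mu P Q R S w +
          (2 * (ell - 1) + mu * Complex.exp w) * Complex.exp w * GR ell lam mu P Q R S w +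
          GS ell lam mu P Q R S w ∧
      Complex.exp w * deriv (GS ell lam mu P Q R S) w =
        (lam + mu ^ 2) * GQ ell lam mu P Q R S w -
          (lam + (ell + 1) * mu * Complex.exp w) * Complex.exp (2 * w) *
            GR ell lam mu P Q R S w +
          (mu + (ell - 1) * Complex.exp w) * GS ell lam mu P Q R S w := by
  have hX : IsPQRSQuad ell lam mu P Q R S := ⟨hP, hQ, hR, hS, hsys1, hsys2, hsys3, hsys4⟩
  have hG : IsShiftedPQRSQuad ell lam mu (GP ell lam mu P Q R S) (GQ ell lam mu P Q R S)
      (GR ell lam mu P Q R S) (GS ell lam mu P Q R S) := by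
    convert hX.shift.sub_const_mul (hX.gaugeTransform hne) (Complex.exp (Complex.I * ell * Real.pi))
      using 1 <;> funext w <;> simp only [GP, GQ, GR, GS] <;> ring
  exact fun w => ⟨hG.deriv_P w, hG.deriv_Q w, hG.deriv_R w, hG.deriv_S w⟩
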